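/- arXiv:1801.03082 — 3 statements merged into one kernel-verified Lean document; each statement's English description precedes it below -/
import Mathlib

section
/- Let f ∈ ℤ[x₁,…,xₙ] be a nonzero polynomial of degree d whose coefficients have greatest common divisor 1. If p is a prime such that p divides f(x) for every x ∈ ℤⁿ, then p ≤ d. -/
/-- Lemma 2.1: if a nonzero integer polynomial with coprime coefficients has a fixed
prime divisor `p`, then `p ≤ deg f`. -/
theorem stmt0 (n : ℕ) (f : MvPolynomial (Fin n) ℤ) (hf : f ≠ 0)
    (hcontent : ∀ c : ℤ, (∀ m ∈ f.support, c ∣ MvPolynomial.coeff m f) → IsUnit c)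
    (p : ℕ) (hp : p.Prime)
    (hdiv : ∀ x : Fin n → ℤ, (p : ℤ) ∣ MvPolynomial.eval x f) :
    p ≤ f.totalDegree := by
  classical
  haveI : Fact p.Prime := ⟨hp⟩
  by_contra hlt
  push_neg at hlt
  set φ : ℤ →+* ZMod p := Int.castRingHom (ZMod p)
  set g : MvPolynomial (Fin n) (ZMod p) := MvPolynomial.map φ f with hg
  -- g vanishes everywhere
  have hvanish : ∀ v : Fin n → ZMod p, MvPolynomial.eval v g = 0 := by
    intro v
    set x : Fin n → ℤ := fun i => (v i).val with hx
    have hxv : ∀ i, φ (x i) = v i := by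
      intro i
      simp [hx, φ, Int.cast_natCast, ZMod.natCast_val, ZMod.cast_id]
    have h1 : MvPolynomial.eval v g = φ (MvPolynomial.eval x f) := by
      rw [hg, MvPolynomial.eval_map]
      rw [show MvPolynomial.eval x f = MvPolynomial.eval₂ (RingHom.id ℤ) x f from rfl]
      rw [MvPolynomial.eval₂_comp_left φ (RingHom.id ℤ) x f]
      simp only [RingHom.comp_id]
      congr 1
      funext i
      exact (hxv i).symm
    rw [h1]
    have := hdiv x
    exact (ZMod.intCast_zmod_eq_zero_iff_dvd _ _).mpr this
  -- degree bound
  have hdeg : g ∈ MvPolynomial.restrictDegree (Fin n) (ZMod p) (Fintype.card (ZMod p) - 1) := by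
    rw [MvPolynomial.mem_restrictDegree_iff_sup]
    intro i
    rw [← MvPolynomial.degreeOf_def]
    have h1 : g.degreeOf i ≤ g.totalDegree := MvPolynomial.degreeOf_le_totalDegree g i
    have h2 : g.totalDegree ≤ f.totalDegree := by
      apply Finset.sup_mono
      exact MvPolynomial.support_map_subset _ _
    have h3 : f.totalDegree ≤ p - 1 := by
      have := hp.one_lt
      omega
    rw [ZMod.card]
    omega
  have hg0 : g = 0 := MvPolynomial.eq_zero_of_eval_eq_zero (Fin n) (ZMod p) g hvanish hdeg
  -- then p divides all coefficients of f
  have : IsUnit ((p : ℤ)) := by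
    apply hcontent
    intro m _
    have : MvPolynomial.coeff m g = 0 := by rw [hg0]; rfl
    rw [hg, MvPolynomial.coeff_map] at this
    exact (ZMod.intCast_zmod_eq_zero_iff_dvd _ _).mp this
  rcases Int.isUnit_iff.mp this with h | h <;> [skip; skip] <;> have := hp.one_lt <;> omega
end

section
/- Let q be a positive integer, b an integer, and x ≥ 1 a real number. Then the number of square-free integers m with 1 ≤ m ≤ x and m ≡ b (mod q) equals Σ_{1 ≤ d ≤ √x, gcd(q,d²) | b} μ(d)·(x·gcd(q,d²)/(q d²) + O(1)), where μ is the Möbius function and the implied constant is absolute. -/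
open scoped ArithmeticFunction ArithmeticFunction.Moebius Classical

/-!
Writing `[m squarefree] = ∑_{d² ∣ m} μ(d)` and exchanging the order of summation, the count
becomes `∑_{d ≤ √x} μ(d) N_d`, where `N_d` counts the `m ≤ x` with `d² ∣ m` and `m ≡ b (mod q)`.
These two congruences are compatible exactly when `gcd(q, d²) ∣ b`; in that case they combine
into a single class modulo `lcm(q, d²) = q d² / gcd(q, d²)`, which contains `x / lcm(q, d²) + O(1)`
integers of `[1, x]`, and otherwise `N_d = 0`.
-/

open Finset

theorem Nat.sq_dvd_sq_mul_iff_dvd {s t d : ℕ} (ht : Squarefree t) (hs : s ≠ 0) :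
    d ^ 2 ∣ s ^ 2 * t ↔ d ∣ s := by
  refine ⟨fun h => ?_, fun h => (pow_dvd_pow_of_dvd h 2).mul_right t⟩
  have hd : d ≠ 0 := by rintro rfl; simp [hs, ht.ne_zero] at h
  rw [← Nat.factorization_le_iff_dvd hd hs]
  intro p
  have hp := (Nat.factorization_le_iff_dvd (pow_ne_zero 2 hd)
    (mul_ne_zero (pow_ne_zero 2 hs) ht.ne_zero)).mpr h p
  simp only [Nat.factorization_mul (pow_ne_zero 2 hs) ht.ne_zero, Nat.factorization_pow,
    Finsupp.coe_add, Finsupp.coe_smul, Pi.add_apply, Pi.smul_apply, smul_eq_mul] at hp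
  have := ht.natFactorization_le_one p
  omega

theorem sum_moebius_filter_sq_dvd {m D : ℕ} (hm : m ≠ 0) (hD : m.sqrt ≤ D) :
    ∑ d ∈ Icc 1 D with d ^ 2 ∣ m, μ d = if Squarefree m then 1 else 0 := by
  obtain ⟨t, s, rfl, ht⟩ := Nat.sq_mul_squarefree m
  have hs : s ≠ 0 := by rintro rfl; simp at hm
  have hdiv : {d ∈ Icc 1 D | d ^ 2 ∣ s ^ 2 * t} = s.divisors := by
    ext d
    simp only [mem_filter, mem_Icc, Nat.mem_divisors, Nat.sq_dvd_sq_mul_iff_dvd ht hs]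
    refine ⟨fun h => ⟨h.2, hs⟩, fun h => ⟨⟨Nat.pos_of_dvd_of_pos h.1 (Nat.pos_of_ne_zero hs),
      ?_⟩, h.1⟩⟩
    exact (Nat.le_sqrt'.mpr (Nat.le_of_dvd (Nat.pos_of_ne_zero hm)
      ((pow_dvd_pow_of_dvd h.1 2).mul_right t))).trans hD
  have hsf : Squarefree (s ^ 2 * t) ↔ s = 1 := by
    refine ⟨fun h => Nat.isUnit_iff.mp (h s ⟨t, by ring⟩), ?_⟩
    rintro rfl
    simpa using ht
  simp only [hdiv, hsf]
  rw [← ArithmeticFunction.coe_mul_zeta_apply, ArithmeticFunction.moebius_mul_coe_zeta,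
    ArithmeticFunction.one_apply]

theorem card_filter_squarefree_eq_sum_moebius (P : ℕ → Prop) [DecidablePred P] {X D : ℕ}
    (hD : X.sqrt ≤ D) :
    (#{m ∈ Icc 1 X | Squarefree m ∧ P m} : ℤ)
      = ∑ d ∈ Icc 1 D, μ d * #{m ∈ Icc 1 X | d ^ 2 ∣ m ∧ P m} := by
  calc (#{m ∈ Icc 1 X | Squarefree m ∧ P m} : ℤ)
      = ∑ m ∈ Icc 1 X, ∑ d ∈ Icc 1 D, if d ^ 2 ∣ m ∧ P m then μ d else 0 := by
        rw [card_filter, Nat.cast_sum]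
        refine sum_congr rfl fun m hm => ?_
        have hm := mem_Icc.mp hm
        have hsum := sum_moebius_filter_sq_dvd (by omega) ((Nat.sqrt_le_sqrt hm.2).trans hD)
        rw [sum_filter] at hsum
        by_cases hP : P m <;> simp [hP, hsum]
    _ = ∑ d ∈ Icc 1 D, ∑ m ∈ Icc 1 X with d ^ 2 ∣ m ∧ P m, μ d := by
        rw [sum_comm]
        simp only [sum_filter]
    _ = ∑ d ∈ Icc 1 D, μ d * #{m ∈ Icc 1 X | d ^ 2 ∣ m ∧ P m} := by
        simp only [sum_const, nsmul_eq_mul, mul_comm]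

theorem Int.abs_card_Ioc_filter_modEq_sub_le {a b : ℤ} (hab : a ≤ b) (v : ℤ) {r : ℤ}
    (hr : 0 < r) : |(#{x ∈ Ioc a b | x ≡ v [ZMOD r]} : ℚ) - (b - a) / r| ≤ 1 := by
  have hcard := Int.Ioc_filter_modEq_card a b hr v
  have hmono : ⌊(a - v) / (r : ℚ)⌋ ≤ ⌊(b - v) / (r : ℚ)⌋ := by gcongr
  rw [max_eq_left (sub_nonneg.mpr hmono)] at hcard
  have hcardℚ : (#{x ∈ Ioc a b | x ≡ v [ZMOD r]} : ℚ)
      = ⌊(b - v) / (r : ℚ)⌋ - ⌊(a - v) / (r : ℚ)⌋ := by exact_mod_cast hcard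
  have hdiff : (b - a) / (r : ℚ) = (b - v) / r - (a - v) / r := by ring
  rw [hcardℚ, hdiff, abs_le]
  constructor <;>
    linarith [Int.floor_le ((b - v) / (r : ℚ)), Int.lt_floor_add_one ((b - v) / (r : ℚ)),
      Int.floor_le ((a - v) / (r : ℚ)), Int.lt_floor_add_one ((a - v) / (r : ℚ))]

theorem card_filter_Icc_intCast_modEq (X : ℕ) (c r : ℤ) :
    #{m ∈ Icc 1 X | ((m : ℕ) : ℤ) ≡ c [ZMOD r]} = #{x ∈ Ioc (0 : ℤ) X | x ≡ c [ZMOD r]} := by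
  rw [← card_map (Nat.castEmbedding (R := ℤ))]
  congr 1
  ext x
  simp only [mem_map, mem_filter, mem_Icc, mem_Ioc, Nat.castEmbedding_apply]
  constructor
  · rintro ⟨m, ⟨⟨h1, h2⟩, hm⟩, rfl⟩
    exact ⟨⟨by omega, by omega⟩, hm⟩
  · rintro ⟨⟨h1, h2⟩, hx⟩
    lift x to ℕ using h1.le
    exact ⟨x, ⟨⟨by omega, by omega⟩, hx⟩, rfl⟩

theorem abs_card_filter_Icc_modEq_sub_le (X : ℕ) (c : ℤ) {r : ℕ} (hr : 0 < r) :
    |(#{m ∈ Icc 1 X | ((m : ℕ) : ℤ) ≡ c [ZMOD r]} : ℝ) - X / r| ≤ 1 := by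
  have hℚ := Int.abs_card_Ioc_filter_modEq_sub_le (Int.natCast_nonneg X) c (Int.natCast_pos.mpr hr)
  have hℝ := (Rat.cast_le (K := ℝ)).mpr hℚ
  rw [card_filter_Icc_intCast_modEq]
  simpa using hℝ

theorem Int.exists_modEq_lcm_iff_dvd_and_modEq {q n b : ℤ} (h : (q.gcd n : ℤ) ∣ b) :
    ∃ c, ∀ m, (n ∣ m ∧ m ≡ b [ZMOD q]) ↔ m ≡ c [ZMOD q.lcm n] := by
  obtain ⟨t, rfl⟩ := h
  refine ⟨n * q.gcdB n * t, fun m => ?_⟩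
  have hcn : n * q.gcdB n * t ≡ 0 [ZMOD n] := Int.modEq_zero_iff_dvd.mpr ⟨q.gcdB n * t, by ring⟩
  have hcq : n * q.gcdB n * t ≡ q.gcd n * t [ZMOD q] :=
    Int.modEq_iff_dvd.mpr ⟨q.gcdA n * t, by rw [Int.gcd_eq_gcd_ab]; ring⟩
  rw [← Int.modEq_and_modEq_iff_modEq_lcm, ← Int.modEq_zero_iff_dvd]
  exact ⟨fun ⟨hn, hq⟩ => ⟨hq.trans hcq.symm, hn.trans hcn.symm⟩,
    fun ⟨hq, hn⟩ => ⟨hn.trans hcn, hq.trans hcq⟩⟩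

theorem Int.gcd_dvd_of_dvd_of_modEq {q n m b : ℤ} (hn : n ∣ m) (hm : m ≡ b [ZMOD q]) :
    (q.gcd n : ℤ) ∣ b := by
  have := dvd_add ((Int.gcd_dvd_right q n).trans hn) ((Int.gcd_dvd_left q n).trans hm.dvd)
  rwa [add_sub_cancel] at this

theorem card_filter_dvd_modEq_eq_zero {q n : ℕ} {b : ℤ} (hb : ¬(q.gcd n : ℤ) ∣ b) (X : ℕ) :
    #{m ∈ Icc 1 X | n ∣ m ∧ (m : ℤ) ≡ b [ZMOD q]} = 0 := by
  refine card_eq_zero.mpr (filter_eq_empty_iff.mpr fun m _ ⟨hn, hm⟩ => hb ?_)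
  simpa using Int.gcd_dvd_of_dvd_of_modEq (Int.natCast_dvd_natCast.mpr hn) hm

theorem abs_card_filter_dvd_modEq_sub_le {q n : ℕ} (hq : q ≠ 0) (hn : n ≠ 0) {b : ℤ}
    (hb : (q.gcd n : ℤ) ∣ b) (X : ℕ) :
    |(#{m ∈ Icc 1 X | n ∣ m ∧ (m : ℤ) ≡ b [ZMOD q]} : ℝ) - X / q.lcm n| ≤ 1 := by
  obtain ⟨c, hc⟩ := Int.exists_modEq_lcm_iff_dvd_and_modEq (q := q) (n := n) hb
  have hfilter : {m ∈ Icc 1 X | n ∣ m ∧ (m : ℤ) ≡ b [ZMOD q]}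
      = {m ∈ Icc 1 X | ((m : ℕ) : ℤ) ≡ c [ZMOD (q.lcm n : ℕ)]} :=
    filter_congr fun m _ => by rw [← Int.natCast_dvd_natCast, hc, Int.lcm_natCast_natCast]
  rw [hfilter]
  exact abs_card_filter_Icc_modEq_sub_le X c (Nat.pos_of_ne_zero (Nat.lcm_ne_zero hq hn))

theorem abs_card_filter_dvd_modEq_sub_le_two {q n : ℕ} (hq : q ≠ 0) (hn : n ≠ 0) {b : ℤ}
    (hb : (q.gcd n : ℤ) ∣ b) {x : ℝ} (hx : 0 ≤ x) :
    |(#{m ∈ Icc 1 ⌊x⌋₊ | n ∣ m ∧ (m : ℤ) ≡ b [ZMOD q]} : ℝ) - x * q.gcd n / (q * n)| ≤ 2 := by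
  have hL : (0 : ℝ) < q.lcm n := by exact_mod_cast Nat.pos_of_ne_zero (Nat.lcm_ne_zero hq hn)
  have hlcm : x * q.gcd n / (q * n) = x / q.lcm n := by
    have hgL : (q.gcd n : ℝ) * q.lcm n = q * n := by exact_mod_cast Nat.gcd_mul_lcm q n
    have hg : (q.gcd n : ℝ) ≠ 0 := by
      exact_mod_cast (Nat.gcd_pos_of_pos_left n (Nat.pos_of_ne_zero hq)).ne'
    rw [← hgL]
    field_simp
  have hfloor : |(⌊x⌋₊ : ℝ) / q.lcm n - x / q.lcm n| ≤ 1 := by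
    have h0 : 0 ≤ x - ⌊x⌋₊ := sub_nonneg.mpr (Nat.floor_le hx)
    rw [abs_sub_comm, ← sub_div, abs_of_nonneg (div_nonneg h0 hL.le), div_le_one hL]
    linarith [Nat.lt_floor_add_one x, (Nat.one_le_cast (α := ℝ)).mpr
      (Nat.pos_of_ne_zero (Nat.lcm_ne_zero hq hn))]
  rw [hlcm]
  linarith [abs_card_filter_dvd_modEq_sub_le hq hn hb ⌊x⌋₊,
    abs_sub_le (#{m ∈ Icc 1 ⌊x⌋₊ | n ∣ m ∧ (m : ℤ) ≡ b [ZMOD q]} : ℝ) (⌊x⌋₊ / q.lcm n)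
      (x / q.lcm n)]

/-- Counting square-free integers `m ≤ x` with `m ≡ b (mod q)` via Möbius inversion:
the count equals `∑_{1 ≤ d ≤ √x, gcd(q,d²) | b} μ(d)(x·gcd(q,d²)/(q d²) + O(1))`
with an absolute implied constant. -/
theorem stmt5 :
    ∃ C : ℝ, 0 < C ∧ ∀ (q : ℕ) (b : ℤ) (x : ℝ), 1 ≤ q → 1 ≤ x →
      ∃ E : ℕ → ℝ, (∀ d, |E d| ≤ C) ∧
        (((Finset.Icc 1 ⌊x⌋₊).filter
            (fun m : ℕ => Squarefree m ∧ (m : ℤ) % (q : ℤ) = b % (q : ℤ))).card : ℝ)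
          = ∑ d ∈ Finset.Icc 1 ⌊Real.sqrt x⌋₊,
              if ((Nat.gcd q (d ^ 2) : ℤ) ∣ b) then
                (μ d : ℝ) * (x * (Nat.gcd q (d ^ 2)) / (q * d ^ 2) + E d)
              else 0 := by
  refine ⟨2, two_pos, fun q b x hq hx => ?_⟩
  have hD : (⌊x⌋₊).sqrt ≤ ⌊√x⌋₊ :=
    Nat.le_floor (Real.nat_sqrt_le_real_sqrt.trans (Real.sqrt_le_sqrt (Nat.floor_le (by linarith))))
  have hsum : (#{m ∈ Icc 1 ⌊x⌋₊ | Squarefree m ∧ ((m : ℕ) : ℤ) ≡ b [ZMOD q]} : ℝ)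
      = ∑ d ∈ Icc 1 ⌊√x⌋₊, (μ d : ℝ) * #{m ∈ Icc 1 ⌊x⌋₊ | d ^ 2 ∣ m ∧ (m : ℤ) ≡ b [ZMOD q]} := by
    exact_mod_cast card_filter_squarefree_eq_sum_moebius (fun m : ℕ => (m : ℤ) ≡ b [ZMOD q]) hD
  set N : ℕ → ℕ := fun d => #{m ∈ Icc 1 ⌊x⌋₊ | d ^ 2 ∣ m ∧ (m : ℤ) ≡ b [ZMOD q]}
  refine ⟨fun d => if d ≠ 0 ∧ (q.gcd (d ^ 2) : ℤ) ∣ b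
    then N d - x * q.gcd (d ^ 2) / (q * d ^ 2) else 0, fun d => ?_,
    hsum.trans (sum_congr rfl fun d hd => ?_)⟩
  · dsimp only
    split_ifs with hd
    · exact_mod_cast abs_card_filter_dvd_modEq_sub_le_two (by omega) (pow_ne_zero 2 hd.1) hd.2
        (by linarith : (0 : ℝ) ≤ x)
    · norm_num
  have hd0 : d ≠ 0 := Nat.one_le_iff_ne_zero.mp (mem_Icc.mp hd).1
  split_ifs with hb
  · simp only [hd0, hb, ne_eq, not_false_eq_true, and_self, if_true]
    ring
  · simp [card_filter_dvd_modEq_eq_zero hb]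
end

section
/- Define g on prime powers by p^ℓ(1 - p^{-2})·g(p^ℓ, p^m) = 0 if ℓ ≥ m ≥ 2; = 1 if m < min{2,ℓ}; = 1 - p^{ℓ-2} if ℓ = m ≤ 1, extend multiplicatively to g(q,d) for d | q, and set G(q) := Σ_{b=1}^{q} e(b/q)·g(q, gcd(b,q)). Then G is multiplicative, vanishes unless q is cube-free, and G(p) = G(p²) = -p^{-2}(1 - p^{-2})^{-1} for every prime p. -/
/-- The local factor `g(p^ℓ, p^m)` (for `m ≤ ℓ`), defined by
`p^ℓ(1-p^{-2})·g(p^ℓ,p^m) = 0` if `ℓ ≥ m ≥ 2`, `= 1` if `m < min{2,ℓ}`,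
`= 1 - p^{ℓ-2}` if `ℓ = m ≤ 1`. -/
noncomputable def gPP (p l m : ℕ) : ℝ :=
  (if 2 ≤ m then 0 else if m < min 2 l then 1 else 1 - (p : ℝ) ^ ((l : ℤ) - 2)) /
    ((p : ℝ) ^ l * (1 - (p : ℝ) ^ (-2 : ℤ)))

/-- `g(q,d) := ∏_{p ∣ q} g(p^{ν_p(q)}, p^{ν_p(d)})` for `d ∣ q`. -/
noncomputable def gMul (q d : ℕ) : ℝ :=
  ∏ p ∈ q.primeFactors, gPP p (q.factorization p) (d.factorization p)

/-- `G(q) := ∑_{b=1}^{q} e(b/q)·g(q, gcd(b,q))`. -/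
noncomputable def Gfun (q : ℕ) : ℂ :=
  ∑ b ∈ Finset.Icc 1 q,
    Complex.exp (2 * Real.pi * Complex.I * b / q) * (gMul q (Nat.gcd b q) : ℝ)

/-
Writing a residue modulo `q * r` (with `q`, `r` coprime) as `a * r + c * q` splits both `e(b/(q r))`
and `gcd(b, q r)`, and `g` is multiplicative in the CRT sense, so `G` is multiplicative. Modulo a
prime power `p ^ l`, `g(p ^ l, gcd(b, p ^ l))` takes only two values, according to whether
`p ^ min 2 l` divides `b`. Hence `G(p ^ l)` is a combination of the complete sum of `e(b/p ^ l)` and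
its sum over multiples of `p ^ min 2 l`; each vanishes unless the modulus reduces to `1`, which only
happens for the second one when `l ≤ 2`.
-/

open Finset Complex Real

theorem Finset.sum_Icc_one_eq_sum_range_of_eq {M : Type*} [AddCancelCommMonoid M] {f : ℕ → M}
    {n : ℕ} (hf : f n = f 0) : ∑ b ∈ Icc 1 n, f b = ∑ b ∈ range n, f b := by
  have h := (sum_range_succ' f n).symm.trans (sum_range_succ f n)
  rw [hf] at h
  rw [← Ico_add_one_right_eq_Icc, sum_Ico_eq_sum_range, Nat.add_sub_cancel]
  simpa only [add_comm 1] using add_right_cancel h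

theorem Finset.sum_range_mul_eq_sum_sum_of_coprime {M : Type*} [AddCommMonoid M] {q r : ℕ}
    (h : q.Coprime r) {F : ℕ → M} (hF : Function.Periodic F (q * r)) :
    ∑ b ∈ range (q * r), F b = ∑ a ∈ range q, ∑ c ∈ range r, F (a * r + c * q) := by
  rcases eq_or_ne (q * r) 0 with hqr | hqr
  · rcases mul_eq_zero.mp hqr with rfl | rfl <;> simp
  rw [← sum_product']
  set φ : ℕ × ℕ → ℕ := fun x => (x.1 * r + x.2 * q) % (q * r)
  have hφ : ∀ x ∈ range q ×ˢ range r, φ x ∈ range (q * r) := fun x _ =>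
    mem_range.mpr (Nat.mod_lt _ (Nat.pos_of_ne_zero hqr))
  have hinj : Set.InjOn φ (range q ×ˢ range r : Finset (ℕ × ℕ)) := by
    rintro ⟨a, c⟩ hac ⟨a', c'⟩ hac' he
    simp only [coe_product, coe_range, Set.mem_prod, Set.mem_Iio] at hac hac'
    have he' : a * r + c * q ≡ a' * r + c' * q [MOD q * r] := he
    have ha : a * r ≡ a' * r [MOD q] := by
      simpa only [Nat.ModEq, Nat.add_mul_mod_self_right] using he'.of_mul_right r
    have hc : c * q ≡ c' * q [MOD r] := by
      simpa only [Nat.ModEq, add_comm (_ * r), Nat.add_mul_mod_self_right] using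
        he'.of_mul_left q
    rw [(ha.cancel_right_of_coprime h).eq_of_lt_of_lt hac.1 hac'.1,
      (hc.cancel_right_of_coprime h.symm).eq_of_lt_of_lt hac.2 hac'.2]
  symm
  exact sum_nbij φ hφ hinj (surjOn_of_injOn_of_card_le φ hφ hinj (by simp))
    fun x _ => (hF.map_mod_nat _).symm

theorem Nat.gcd_mul_add_mul_of_coprime {q r : ℕ} (h : q.Coprime r) (a c : ℕ) :
    (a * r + c * q).gcd (q * r) = a.gcd q * c.gcd r := by
  rw [Nat.Coprime.gcd_mul _ h, Nat.gcd_add_mul_right_left, add_comm, Nat.gcd_add_mul_right_left,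
    Nat.Coprime.gcd_mul_right_cancel _ h.symm, Nat.Coprime.gcd_mul_right_cancel _ h]

theorem Nat.factorization_mul_apply_of_not_dvd {a b p : ℕ} (ha : a ≠ 0) (hb : b ≠ 0)
    (hpb : ¬p ∣ b) : (a * b).factorization p = a.factorization p := by
  rw [Nat.factorization_mul ha hb, Finsupp.add_apply, Nat.factorization_eq_zero_of_not_dvd hpb,
    add_zero]

theorem cexp_two_pi_I_mul_div_eq_pow (b n : ℕ) :
    cexp (2 * π * I * b / n) = cexp (2 * π * I / n) ^ b := by
  rw [← Complex.exp_nat_mul]; ring_nf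

theorem cexp_two_pi_I_div_pow_self (n : ℕ) : cexp (2 * π * I / n) ^ n = 1 := by
  rcases eq_or_ne n 0 with rfl | hn
  · exact pow_zero _
  · exact (Complex.isPrimitiveRoot_exp n hn).pow_eq_one

theorem periodic_cexp_mul_gcd (n : ℕ) (w : ℕ → ℂ) :
    Function.Periodic (fun b : ℕ => cexp (2 * π * I * b / n) * w (b.gcd n)) n := by
  intro b
  simp only [cexp_two_pi_I_mul_div_eq_pow, pow_add, cexp_two_pi_I_div_pow_self, mul_one,
    Nat.gcd_add_self_left]

theorem sum_range_filter_dvd_cexp {m n : ℕ} (hmn : m ∣ n) (hn : n ≠ 0) :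
    ∑ b ∈ (range n).filter (m ∣ ·), cexp (2 * π * I * b / n) = if n = m then 1 else 0 := by
  obtain ⟨k, rfl⟩ := hmn
  have hm : m ≠ 0 := left_ne_zero_of_mul hn
  have hk : k ≠ 0 := right_ne_zero_of_mul hn
  have hmult : (range (m * k)).filter (m ∣ ·) = (range k).image (m * ·) := by
    ext b
    simp only [mem_filter, mem_range, mem_image]
    constructor
    · rintro ⟨hb, j, rfl⟩
      exact ⟨j, Nat.lt_of_mul_lt_mul_left hb, rfl⟩
    · rintro ⟨j, hj, rfl⟩
      exact ⟨Nat.mul_lt_mul_of_pos_left hj (Nat.pos_of_ne_zero hm), dvd_mul_right m j⟩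
  have hζ := Complex.isPrimitiveRoot_exp k hk
  rw [hmult, sum_image fun _ _ _ _ h => Nat.eq_of_mul_eq_mul_left (Nat.pos_of_ne_zero hm) h]
  have hterm : ∀ j : ℕ, cexp (2 * π * I * ↑(m * j) / ↑(m * k)) = cexp (2 * π * I / k) ^ j := by
    intro j
    rw [← cexp_two_pi_I_mul_div_eq_pow]
    congr 1
    push_cast
    field_simp
  simp only [hterm]
  rcases Nat.lt_or_ge 1 k with hk1 | hk1
  · rw [hζ.geom_sum_eq_zero hk1, if_neg fun h => hk1.ne' ((Nat.mul_eq_left hm).mp h)]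
  · obtain rfl : k = 1 := by omega
    simp

theorem sum_range_cexp {n : ℕ} (hn : n ≠ 0) :
    ∑ b ∈ range n, cexp (2 * π * I * b / n) = if n = 1 then 1 else 0 := by
  simpa using sum_range_filter_dvd_cexp (one_dvd n) hn

theorem sum_range_cexp_mul_ite_dvd {m n : ℕ} (hmn : m ∣ n) (hn : n ≠ 0) (A B : ℂ) :
    ∑ b ∈ range n, cexp (2 * π * I * b / n) * (if m ∣ b then A else B) =
      (if n = 1 then B else 0) + if n = m then A - B else 0 := by
  have hsplit : ∀ b : ℕ, cexp (2 * π * I * b / n) * (if m ∣ b then A else B) =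
      B * cexp (2 * π * I * b / n) + (A - B) * if m ∣ b then cexp (2 * π * I * b / n) else 0 := by
    intro b; split_ifs <;> ring
  rw [sum_congr rfl fun b _ => hsplit b, sum_add_distrib, ← mul_sum, ← mul_sum, ← sum_filter,
    sum_range_cexp hn, sum_range_filter_dvd_cexp hmn hn]
  split_ifs <;> ring

theorem gMul_mul {q r d₁ d₂ : ℕ} (hq : q ≠ 0) (hr : r ≠ 0) (h : q.Coprime r)
    (h₁ : d₁ ∣ q) (h₂ : d₂ ∣ r) : gMul (q * r) (d₁ * d₂) = gMul q d₁ * gMul r d₂ := by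
  have hd₁ : d₁ ≠ 0 := ne_zero_of_dvd_ne_zero hq h₁
  have hd₂ : d₂ ≠ 0 := ne_zero_of_dvd_ne_zero hr h₂
  have hndvd : ∀ {p m n : ℕ}, m.Coprime n → p ∈ m.primeFactors → ¬p ∣ n := fun hmn hp hpn =>
    (Nat.prime_of_mem_primeFactors hp).one_lt.ne'
      (Nat.eq_one_of_dvd_coprimes hmn (Nat.dvd_of_mem_primeFactors hp) hpn)
  rw [gMul, gMul, gMul, Nat.primeFactors_mul hq hr, prod_union h.disjoint_primeFactors]
  congr 1 <;> refine prod_congr rfl fun p hp => ?_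
  · have hpr := hndvd h hp
    rw [Nat.factorization_mul_apply_of_not_dvd hq hr hpr,
      Nat.factorization_mul_apply_of_not_dvd hd₁ hd₂ (mt (dvd_trans · h₂) hpr)]
  · have hpq := hndvd h.symm hp
    rw [mul_comm q, mul_comm d₁, Nat.factorization_mul_apply_of_not_dvd hr hq hpq,
      Nat.factorization_mul_apply_of_not_dvd hd₂ hd₁ (mt (dvd_trans · h₁) hpq)]

theorem gMul_prime_pow {p l : ℕ} (hp : p.Prime) (hl : l ≠ 0) (d : ℕ) :
    gMul (p ^ l) d = gPP p l (d.factorization p) := by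
  rw [gMul, Nat.primeFactors_prime_pow hl hp, prod_singleton, hp.factorization_pow,
    Finsupp.single_eq_same]

theorem gPP_eq_of_le {p l m : ℕ} (hm : m ≤ l) :
    gPP p l m = if min 2 l ≤ m then gPP p l (min 2 l) else gPP p l 0 := by
  unfold gPP
  split_ifs <;> first | rfl | omega

theorem gMul_prime_pow_gcd {p l : ℕ} (hp : p.Prime) (hl : l ≠ 0) (b : ℕ) :
    gMul (p ^ l) (b.gcd (p ^ l)) =
      if p ^ min 2 l ∣ b then gPP p l (min 2 l) else gPP p l 0 := by
  have hpl : p ^ l ≠ 0 := pow_ne_zero l hp.ne_zero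
  have hgcd : b.gcd (p ^ l) ≠ 0 := Nat.gcd_ne_zero_right hpl
  have hle : (b.gcd (p ^ l)).factorization p ≤ l := by
    simpa [hp.factorization_pow] using
      (Nat.factorization_le_iff_dvd hgcd hpl).mpr (Nat.gcd_dvd_right b (p ^ l)) p
  have hdvd : p ^ min 2 l ∣ b ↔ min 2 l ≤ (b.gcd (p ^ l)).factorization p := by
    rw [← hp.pow_dvd_iff_le_factorization hgcd, Nat.dvd_gcd_iff,
      and_iff_left (pow_dvd_pow p (min_le_right 2 l))]
  rw [gMul_prime_pow hp hl, gPP_eq_of_le hle]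
  simp only [hdvd]

theorem gPP_sub_gPP_zero {p l : ℕ} (hl : l ≠ 0) (hl2 : l ≤ 2) :
    gPP p l (min 2 l) - gPP p l 0 = -((p : ℝ) ^ (-2 : ℤ)) * (1 - (p : ℝ) ^ (-2 : ℤ))⁻¹ := by
  obtain rfl | rfl : l = 1 ∨ l = 2 := by omega
  all_goals norm_num [gPP, div_eq_mul_inv, mul_inv]; ring

theorem Gfun_eq_sum_range (q : ℕ) :
    Gfun q = ∑ b ∈ range q, cexp (2 * π * I * b / q) * ((gMul q (b.gcd q) : ℝ) : ℂ) :=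
  sum_Icc_one_eq_sum_range_of_eq <| by
    simpa using periodic_cexp_mul_gcd q (fun d => (gMul q d : ℂ)) 0

theorem Gfun_zero : Gfun 0 = 0 := by simp [Gfun]

theorem Gfun_one : Gfun 1 = 1 := by simp [Gfun, gMul]

theorem Gfun_mul_of_coprime {q r : ℕ} (h : q.Coprime r) : Gfun (q * r) = Gfun q * Gfun r := by
  rcases eq_or_ne q 0 with rfl | hq
  · simp [Gfun_zero]
  rcases eq_or_ne r 0 with rfl | hr
  · simp [Gfun_zero]
  rw [Gfun_eq_sum_range, Gfun_eq_sum_range, Gfun_eq_sum_range,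
    sum_range_mul_eq_sum_sum_of_coprime h
      (periodic_cexp_mul_gcd _ fun d => (gMul (q * r) d : ℂ)), sum_mul_sum]
  refine sum_congr rfl fun a _ => sum_congr rfl fun c _ => ?_
  have hexp : cexp (2 * π * I * ↑(a * r + c * q) / ↑(q * r)) =
      cexp (2 * π * I * a / q) * cexp (2 * π * I * c / r) := by
    rw [← Complex.exp_add]
    congr 1
    push_cast
    field_simp
  rw [Nat.gcd_mul_add_mul_of_coprime h,
    gMul_mul hq hr h (Nat.gcd_dvd_right a q) (Nat.gcd_dvd_right c r), hexp]
  push_cast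
  ring

theorem Gfun_prime_pow {p l : ℕ} (hp : p.Prime) (hl : l ≠ 0) :
    Gfun (p ^ l) = if l ≤ 2 then ((gPP p l (min 2 l) - gPP p l 0 : ℝ) : ℂ) else 0 := by
  rw [Gfun_eq_sum_range]
  simp_rw [gMul_prime_pow_gcd hp hl, apply_ite (fun x : ℝ => (x : ℂ))]
  rw [sum_range_cexp_mul_ite_dvd (pow_dvd_pow p (min_le_right 2 l)) (pow_ne_zero l hp.ne_zero),
    if_neg (by simp [hp.ne_one, hl]), zero_add]
  have hk : p ^ l = p ^ min 2 l ↔ l ≤ 2 :=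
    (Nat.pow_right_injective hp.two_le).eq_iff.trans (by omega)
  simp only [hk]
  push_cast
  rfl

theorem Gfun_eq_zero_of_pow_three_dvd {p q : ℕ} (hp : p.Prime) (h : p ^ 3 ∣ q) : Gfun q = 0 := by
  rcases eq_or_ne q 0 with rfl | hq
  · exact Gfun_zero
  have hl : 3 ≤ q.factorization p := (hp.pow_dvd_iff_le_factorization hq).mp h
  rw [← Nat.ordProj_mul_ordCompl_eq_self q p,
    Gfun_mul_of_coprime ((Nat.coprime_ordCompl hp hq).pow_left _), Gfun_prime_pow hp (by omega),
    if_neg (by omega), zero_mul]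

theorem Gfun_prime_pow_of_le_two {p l : ℕ} (hp : p.Prime) (hl : l ≠ 0) (hl2 : l ≤ 2) :
    Gfun (p ^ l) = -((p : ℂ) ^ (-2 : ℤ)) * (1 - (p : ℂ) ^ (-2 : ℤ))⁻¹ := by
  rw [Gfun_prime_pow hp hl, if_pos hl2, gPP_sub_gPP_zero hl hl2]
  push_cast
  rfl

/-- `G` is multiplicative, vanishes unless `q` is cube-free, and
`G(p) = G(p²) = -p^{-2}(1-p^{-2})^{-1}` for every prime `p`. -/
theorem stmt10 :
    (Gfun 1 = 1 ∧ ∀ q r : ℕ, Nat.Coprime q r → Gfun (q * r) = Gfun q * Gfun r) ∧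
    (∀ q p : ℕ, p.Prime → p ^ 3 ∣ q → Gfun q = 0) ∧
    (∀ p : ℕ, p.Prime →
      Gfun p = -((p : ℂ) ^ (-2 : ℤ)) * (1 - (p : ℂ) ^ (-2 : ℤ))⁻¹ ∧
      Gfun (p ^ 2) = -((p : ℂ) ^ (-2 : ℤ)) * (1 - (p : ℂ) ^ (-2 : ℤ))⁻¹) := by
  refine ⟨⟨Gfun_one, fun q r h => Gfun_mul_of_coprime h⟩,
    fun q p hp h => Gfun_eq_zero_of_pow_three_dvd hp h, fun p hp => ⟨?_, ?_⟩⟩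
  · simpa using Gfun_prime_pow_of_le_two hp one_ne_zero one_le_two
  · exact Gfun_prime_pow_of_le_two hp two_ne_zero le_rfl
end
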